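/- arXiv:1909.00015 — 8 statements merged into one kernel-verified Lean document; each statement's English description precedes it below -/
import Mathlib

section
/- Let α > 1 and z ∈ ℝ^d. There exists a unique τ* ∈ ℝ such that the vector p with coordinates p_i = [(α−1)z_i − τ*]_+^{1/(α−1)} satisfies Σ_i p_i = 1, and this vector p is the unique maximizer of p·z + H_α(p) over the probability simplex Δ^d, i.e., p = entmax_α(z). -/
/-!
On the simplex, subtracting the multiplier `τ/(α-1)` of the constraint `∑ qᵢ = 1` splits the
objective into coordinates: `q·z + H_α(q)` equals a constant plus `(α-1)⁻¹ ∑ᵢ g(uᵢ, qᵢ)`, where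
`uᵢ = (α-1)zᵢ - τ` and `g(u, t) = u t - t^α/α`. On `t ≥ 0` the strictly concave function `g(u, ·)`
has its unique maximum at `[u]_+^{1/(α-1)}` (the first-order condition reads `t^{α-1} = u`), so
the threshold vector strictly beats every other point of the simplex. The threshold itself
exists and is unique because `τ ↦ ∑ᵢ [xᵢ - τ]_+^κ` is continuous, vanishes for large `τ`,
exceeds any bound for small `τ`, and is strictly decreasing wherever it is positive.
-/

def probSimplex (d : ℕ) : Set (Fin d → ℝ) :=
  {p | (∀ j, 0 ≤ p j) ∧ ∑ j, p j = 1}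

noncomputable def tsallisEntropy (d : ℕ) (α : ℝ) (p : Fin d → ℝ) : ℝ :=
  (1 / (α * (α - 1))) * ∑ j, (p j - p j ^ α)

open Finset Real

section ThresholdSum

variable {ι : Type*} [Fintype ι] {κ : ℝ}

lemma antitone_rpow_max_sub (hκ : 0 ≤ κ) (x : ℝ) : Antitone fun τ : ℝ => max (x - τ) 0 ^ κ :=
  fun _ _ h => rpow_le_rpow (le_max_right _ _) (max_le_max (by linarith) le_rfl) hκ

lemma sum_rpow_max_sub_lt_of_lt (hκ : 0 < κ) (x : ι → ℝ) {τ₁ τ₂ : ℝ} (h : τ₁ < τ₂)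
    (hpos : 0 < ∑ i, max (x i - τ₂) 0 ^ κ) :
    ∑ i, max (x i - τ₂) 0 ^ κ < ∑ i, max (x i - τ₁) 0 ^ κ := by
  obtain ⟨i, -, hi⟩ := exists_lt_of_sum_lt (f := fun _ => (0 : ℝ)) (by simpa using hpos)
  have hxi : 0 < x i - τ₂ := by
    by_contra! h
    rw [max_eq_right h, zero_rpow hκ.ne'] at hi
    exact hi.false
  refine sum_lt_sum (fun j _ => antitone_rpow_max_sub hκ.le (x j) h.le) ⟨i, mem_univ i, ?_⟩
  rw [max_eq_left hxi.le]
  exact rpow_lt_rpow hxi.le (lt_max_of_lt_left (by linarith)) hκ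

lemma exists_unique_sum_rpow_max_sub_eq [Nonempty ι] (hκ : 0 < κ) (x : ι → ℝ) {s : ℝ}
    (hs : 0 < s) : ∃! τ : ℝ, ∑ i, max (x i - τ) 0 ^ κ = s := by
  obtain ⟨i₀⟩ := ‹Nonempty ι›
  set M := univ.sup' univ_nonempty x
  set m := univ.inf' univ_nonempty x - s ^ κ⁻¹
  have hM : ∑ i, max (x i - M) 0 ^ κ = 0 := sum_eq_zero fun i _ => by
    rw [max_eq_right (sub_nonpos.2 (le_sup' x (mem_univ i))), zero_rpow hκ.ne']
  have hm : s ≤ ∑ i, max (x i - m) 0 ^ κ := by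
    have hroot : s ^ κ⁻¹ ≤ max (x i₀ - m) 0 :=
      le_max_of_le_left (by linarith [inf'_le x (mem_univ i₀)])
    calc s = (s ^ κ⁻¹) ^ κ := (rpow_inv_rpow hs.le hκ.ne').symm
      _ ≤ max (x i₀ - m) 0 ^ κ := rpow_le_rpow (by positivity) hroot hκ.le
      _ ≤ ∑ i, max (x i - m) 0 ^ κ :=
        single_le_sum (f := fun i => max (x i - m) 0 ^ κ)
          (fun i _ => rpow_nonneg (le_max_right _ _) κ) (mem_univ i₀)
  have hmM : m ≤ M := by
    linarith [inf'_le x (mem_univ i₀), le_sup' x (mem_univ i₀), rpow_nonneg hs.le κ⁻¹]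
  have hcont : Continuous fun τ : ℝ => ∑ i, max (x i - τ) 0 ^ κ := by
    fun_prop (disch := exact hκ.le)
  obtain ⟨τ, -, hτ : ∑ i, max (x i - τ) 0 ^ κ = s⟩ :=
    intermediate_value_Icc' hmM hcont.continuousOn ⟨hM.le.trans hs.le, hm⟩
  refine ⟨τ, hτ, fun τ' hτ' => ?_⟩
  rcases lt_trichotomy τ' τ with h | h | h
  · exact absurd (hτ'.trans hτ.symm) (sum_rpow_max_sub_lt_of_lt hκ x h (hτ ▸ hs)).ne'
  · exact h
  · exact absurd (hτ.trans hτ'.symm) (sum_rpow_max_sub_lt_of_lt hκ x h (hτ' ▸ hs)).ne'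

end ThresholdSum

lemma rpow_add_mul_rpow_sub_one_mul_sub_lt {a s t : ℝ} (ha : 1 < a) (hs : 0 < s) (ht : 0 ≤ t)
    (hts : t ≠ s) : s ^ a + a * s ^ (a - 1) * (t - s) < t ^ a := by
  have hb := one_add_mul_self_lt_rpow_one_add (s := t / s - 1)
    (by linarith [div_nonneg ht hs.le]) (by rwa [sub_ne_zero, ne_eq, div_eq_one_iff_eq hs.ne'])
    ha
  rw [add_sub_cancel, div_rpow ht hs.le, lt_div_iff₀ (rpow_pos_of_pos hs a)] at hb
  calc s ^ a + a * s ^ (a - 1) * (t - s) = (1 + a * (t / s - 1)) * s ^ a := by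
        rw [rpow_sub hs, rpow_one]; field_simp
    _ < t ^ a := hb

lemma mul_sub_rpow_div_lt_of_ne_max_rpow {a : ℝ} (ha : 1 < a) (u : ℝ) {t : ℝ} (ht : 0 ≤ t)
    (hne : t ≠ max u 0 ^ (1 / (a - 1))) :
    u * t - t ^ a / a < u * max u 0 ^ (1 / (a - 1)) - (max u 0 ^ (1 / (a - 1))) ^ a / a := by
  set p := max u 0 ^ (1 / (a - 1))
  have ha0 : 0 < a := by linarith
  rcases le_or_gt u 0 with hu | hu
  · have hp : p = 0 := by
      simp only [p]
      rw [max_eq_right hu, zero_rpow (one_div_pos.2 (sub_pos.2 ha)).ne']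
    rw [hp] at hne ⊢
    have htpos : 0 < t := lt_of_le_of_ne ht (Ne.symm hne)
    have : 0 < t ^ a / a := div_pos (rpow_pos_of_pos htpos a) ha0
    rw [zero_rpow ha0.ne', mul_zero, zero_div, sub_zero]
    linarith [mul_nonpos_of_nonpos_of_nonneg hu ht]
  · have hp : 0 < p := rpow_pos_of_pos (lt_max_of_lt_left hu) _
    have hppow : p ^ (a - 1) = u := by
      rw [← rpow_mul (le_max_right _ _), one_div_mul_cancel (sub_pos.2 ha).ne', rpow_one,
        max_eq_left hu.le]
    have htangent := rpow_add_mul_rpow_sub_one_mul_sub_lt ha hp ht hne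
    rw [hppow] at htangent
    rw [← sub_pos]
    field_simp
    linarith

lemma mul_sub_rpow_div_le_max_rpow {a : ℝ} (ha : 1 < a) (u : ℝ) {t : ℝ} (ht : 0 ≤ t) :
    u * t - t ^ a / a ≤ u * max u 0 ^ (1 / (a - 1)) - (max u 0 ^ (1 / (a - 1))) ^ a / a := by
  rcases eq_or_ne t (max u 0 ^ (1 / (a - 1))) with rfl | hne
  · rfl
  · exact (mul_sub_rpow_div_lt_of_ne_max_rpow ha u ht hne).le

noncomputable def entmaxThreshold {d : ℕ} (α τ : ℝ) (z : Fin d → ℝ) : Fin d → ℝ :=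
  fun i => max ((α - 1) * z i - τ) 0 ^ (1 / (α - 1))

section Entmax

variable {d : ℕ} {α : ℝ} {z : Fin d → ℝ}

lemma sum_mul_add_tsallisEntropy_eq (hα : α ≠ 1) (τ : ℝ) {q : Fin d → ℝ} (hq : ∑ i, q i = 1) :
    ∑ i, q i * z i + tsallisEntropy d α q = 1 / (α * (α - 1)) + τ / (α - 1) +
      (α - 1)⁻¹ * ∑ i, (((α - 1) * z i - τ) * q i - q i ^ α / α) := by
  have hα' : α - 1 ≠ 0 := sub_ne_zero.2 hα
  calc ∑ i, q i * z i + tsallisEntropy d α q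
      = ∑ i, (q i * z i + 1 / (α * (α - 1)) * (q i - q i ^ α)) := by
        rw [tsallisEntropy, mul_sum, sum_add_distrib]
    _ = ∑ i, ((1 / (α * (α - 1)) + τ / (α - 1)) * q i +
          (α - 1)⁻¹ * (((α - 1) * z i - τ) * q i - q i ^ α / α)) :=
        sum_congr rfl fun i _ => by field_simp; ring
    _ = _ := by rw [sum_add_distrib, ← mul_sum, ← mul_sum, hq, mul_one]

lemma sum_mul_add_tsallisEntropy_le (hα : 1 < α) {τ : ℝ}
    (hτ : ∑ i, entmaxThreshold α τ z i = 1) {q : Fin d → ℝ} (hq : q ∈ probSimplex d) :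
    ∑ i, q i * z i + tsallisEntropy d α q ≤
      ∑ i, entmaxThreshold α τ z i * z i + tsallisEntropy d α (entmaxThreshold α τ z) := by
  rw [sum_mul_add_tsallisEntropy_eq hα.ne' τ hq.2, sum_mul_add_tsallisEntropy_eq hα.ne' τ hτ]
  have hsum := sum_le_sum fun i (_ : i ∈ univ) => mul_sub_rpow_div_le_max_rpow hα
    ((α - 1) * z i - τ) (hq.1 i)
  exact add_le_add le_rfl (mul_le_mul_of_nonneg_left hsum (inv_pos.2 (sub_pos.2 hα)).le)

lemma sum_mul_add_tsallisEntropy_lt (hα : 1 < α) {τ : ℝ}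
    (hτ : ∑ i, entmaxThreshold α τ z i = 1) {q : Fin d → ℝ} (hq : q ∈ probSimplex d)
    (hne : q ≠ entmaxThreshold α τ z) :
    ∑ i, q i * z i + tsallisEntropy d α q <
      ∑ i, entmaxThreshold α τ z i * z i + tsallisEntropy d α (entmaxThreshold α τ z) := by
  obtain ⟨i, hi⟩ := Function.ne_iff.mp hne
  rw [sum_mul_add_tsallisEntropy_eq hα.ne' τ hq.2, sum_mul_add_tsallisEntropy_eq hα.ne' τ hτ]
  have hsum := sum_lt_sum
    (fun j _ => mul_sub_rpow_div_le_max_rpow hα ((α - 1) * z j - τ) (hq.1 j))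
    ⟨i, mem_univ i, mul_sub_rpow_div_lt_of_ne_max_rpow hα ((α - 1) * z i - τ) (hq.1 i) hi⟩
  exact add_lt_add_of_le_of_lt le_rfl (mul_lt_mul_of_pos_left hsum (inv_pos.2 (sub_pos.2 hα)))

end Entmax

/-- Let `α > 1` and `z ∈ ℝ^d`.  There is a unique `τ* ∈ ℝ` such that the vector
`p` with `p_i = [(α−1)z_i − τ*]_+^{1/(α−1)}` sums to one; and this vector `p`
is the unique maximizer of `p·z + H_α(p)` over the probability simplex, i.e.
`p = entmax_α(z)`. -/
theorem entmax_threshold_form (d : ℕ) (hd : 0 < d) (α : ℝ) (hα : 1 < α)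
    (z : Fin d → ℝ) :
    (∃! τ : ℝ, ∑ i, max ((α - 1) * z i - τ) 0 ^ (1 / (α - 1)) = 1) ∧
    ∀ τ : ℝ, (∑ i, max ((α - 1) * z i - τ) 0 ^ (1 / (α - 1)) = 1) →
      ((fun i => max ((α - 1) * z i - τ) 0 ^ (1 / (α - 1))) ∈ probSimplex d ∧
        (∀ q ∈ probSimplex d,
          ∑ i, q i * z i + tsallisEntropy d α q ≤
            ∑ i, (max ((α - 1) * z i - τ) 0 ^ (1 / (α - 1))) * z i +
              tsallisEntropy d α (fun i => max ((α - 1) * z i - τ) 0 ^ (1 / (α - 1)))) ∧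
        ∀ q ∈ probSimplex d,
          (∀ r ∈ probSimplex d,
            ∑ i, r i * z i + tsallisEntropy d α r ≤ ∑ i, q i * z i + tsallisEntropy d α q) →
          q = fun i => max ((α - 1) * z i - τ) 0 ^ (1 / (α - 1))) := by
  have : Nonempty (Fin d) := ⟨⟨0, hd⟩⟩
  refine ⟨exists_unique_sum_rpow_max_sub_eq (one_div_pos.2 (sub_pos.2 hα)) _ one_pos,
    fun τ hτ => ?_⟩
  have hp : entmaxThreshold α τ z ∈ probSimplex d :=
    ⟨fun i => rpow_nonneg (le_max_right _ _) _, hτ⟩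
  refine ⟨hp, fun q hq => sum_mul_add_tsallisEntropy_le hα hτ hq, fun q hq hmax => ?_⟩
  by_contra hne
  exact (sum_mul_add_tsallisEntropy_lt hα hτ hq hne).not_ge (hmax _ hp)
end

section
/- For every z ∈ ℝ^d, there exists a unique τ ∈ ℝ such that the vector p with coordinates p_i = [z_i − τ]_+ satisfies Σ_i p_i = 1, and this p is the unique minimizer of ‖p − z‖₂² over the probability simplex Δ^d, i.e., p = sparsemax(z), the Euclidean projection of z onto Δ^d. -/
open Finset

namespace Sparsemax

variable {ι : Type*}

def threshold (z : ι → ℝ) (τ : ℝ) : ι → ℝ := fun i => max (z i - τ) 0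

lemma threshold_nonneg (z : ι → ℝ) (τ : ℝ) (i : ι) : 0 ≤ threshold z τ i :=
  le_max_right _ _

lemma continuous_sum_threshold [Fintype ι] (z : ι → ℝ) :
    Continuous fun τ => ∑ i, threshold z τ i := by
  unfold threshold
  fun_prop

lemma sum_threshold_lt_of_lt [Fintype ι] (z : ι → ℝ) {τ₁ τ₂ : ℝ} (h : τ₁ < τ₂)
    (hpos : 0 < ∑ i, threshold z τ₂ i) : ∑ i, threshold z τ₂ i < ∑ i, threshold z τ₁ i := by
  obtain ⟨i, -, hi⟩ := exists_lt_of_sum_lt (s := univ) (f := fun _ => (0 : ℝ))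
    (by simpa using hpos)
  have hzi : τ₂ < z i := by simpa [threshold] using hi
  refine sum_lt_sum (fun j _ => max_le_max (by linarith) le_rfl) ⟨i, mem_univ i, ?_⟩
  calc threshold z τ₂ i = z i - τ₂ := max_eq_left (by linarith)
    _ < z i - τ₁ := by linarith
    _ ≤ threshold z τ₁ i := le_max_left _ _

lemma eq_of_sum_threshold_eq [Fintype ι] (z : ι → ℝ) {c τ₁ τ₂ : ℝ} (hc : 0 < c)
    (h₁ : ∑ i, threshold z τ₁ i = c) (h₂ : ∑ i, threshold z τ₂ i = c) : τ₁ = τ₂ := by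
  rcases lt_trichotomy τ₁ τ₂ with h | h | h
  · linarith [sum_threshold_lt_of_lt z h (h₂ ▸ hc)]
  · exact h
  · linarith [sum_threshold_lt_of_lt z h (h₁ ▸ hc)]

lemma exists_sum_threshold_eq [Fintype ι] [Nonempty ι] (z : ι → ℝ) {c : ℝ} (hc : 0 ≤ c) :
    ∃ τ, ∑ i, threshold z τ i = c := by
  obtain ⟨i₀⟩ := ‹Nonempty ι›
  set τmax := univ.sup' univ_nonempty z
  have hlo : c ≤ ∑ i, threshold z (z i₀ - c) i := by
    calc c = threshold z (z i₀ - c) i₀ := by simp [threshold, hc]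
      _ ≤ ∑ i, threshold z (z i₀ - c) i :=
        single_le_sum (fun i _ => threshold_nonneg z _ i) (mem_univ i₀)
  have hhi : ∑ i, threshold z τmax i = 0 :=
    sum_eq_zero fun i _ => max_eq_right (sub_nonpos.mpr (le_sup' z (mem_univ i)))
  have hle : z i₀ - c ≤ τmax := (sub_le_self _ hc).trans (le_sup' z (mem_univ i₀))
  obtain ⟨τ, -, hτ⟩ := intermediate_value_Icc' hle (continuous_sum_threshold z).continuousOn
    ⟨hhi.le.trans hc, hlo⟩
  exact ⟨τ, hτ⟩

lemma neg_mul_le_mul_threshold_sub (z : ι → ℝ) (τ : ℝ) (i : ι) {q : ℝ} (hq : 0 ≤ q) :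
    -τ * (q - threshold z τ i) ≤ (q - threshold z τ i) * (threshold z τ i - z i) := by
  rcases le_or_gt τ (z i) with h | h
  · rw [threshold, max_eq_left (sub_nonneg.mpr h)]
    exact le_of_eq (by ring)
  · rw [threshold, max_eq_right (sub_nonpos.mpr h.le)]
    nlinarith

lemma sum_sq_threshold_sub_add_sum_sq_le [Fintype ι] (z : ι → ℝ) (τ : ℝ) {q : ι → ℝ}
    (hq : ∀ i, 0 ≤ q i) (hsum : ∑ i, q i = ∑ i, threshold z τ i) :
    ∑ i, (threshold z τ i - z i) ^ 2 + ∑ i, (q i - threshold z τ i) ^ 2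
      ≤ ∑ i, (q i - z i) ^ 2 := by
  have hinner : 0 ≤ ∑ i, (q i - threshold z τ i) * (threshold z τ i - z i) :=
    calc (0 : ℝ) = -τ * ∑ i, (q i - threshold z τ i) := by rw [sum_sub_distrib, hsum]; ring
      _ = ∑ i, -τ * (q i - threshold z τ i) := mul_sum _ _ _
      _ ≤ _ := sum_le_sum fun i _ => neg_mul_le_mul_threshold_sub z τ i (hq i)
  have hexpand : ∑ i, (q i - z i) ^ 2 = ∑ i, (threshold z τ i - z i) ^ 2
      + ∑ i, (q i - threshold z τ i) ^ 2
      + 2 * ∑ i, (q i - threshold z τ i) * (threshold z τ i - z i) := by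
    rw [mul_sum, ← sum_add_distrib, ← sum_add_distrib]
    exact sum_congr rfl fun i _ => by ring
  linarith

lemma eq_of_sum_sq_sub_nonpos [Fintype ι] {p q : ι → ℝ} (h : ∑ i, (q i - p i) ^ 2 ≤ 0) :
    q = p := by
  have hzero := (sum_eq_zero_iff_of_nonneg fun i _ => sq_nonneg (q i - p i)).mp
    (h.antisymm (sum_nonneg fun i _ => sq_nonneg _))
  funext i
  exact sub_eq_zero.mp (pow_eq_zero_iff two_ne_zero |>.mp (hzero i (mem_univ i)))

end Sparsemax

open Sparsemax in
/-- For every `z ∈ ℝ^d`, there exists a unique `τ ∈ ℝ` such that the vector `p`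
with coordinates `p_i = [z_i − τ]_+` sums to one, and this `p` is the unique
minimizer of `‖p − z‖₂²` over the probability simplex, i.e. `p = sparsemax(z)`,
the Euclidean projection of `z` onto the simplex. -/
theorem sparsemax_threshold_form (d : ℕ) (hd : 0 < d) (z : Fin d → ℝ) :
    (∃! τ : ℝ, ∑ i, max (z i - τ) 0 = 1) ∧
    ∀ τ : ℝ, (∑ i, max (z i - τ) 0 = 1) →
      ((fun i => max (z i - τ) 0) ∈ probSimplex d ∧
        (∀ q ∈ probSimplex d,
          ∑ i, (max (z i - τ) 0 - z i) ^ 2 ≤ ∑ i, (q i - z i) ^ 2) ∧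
        ∀ q ∈ probSimplex d,
          (∀ r ∈ probSimplex d, ∑ i, (q i - z i) ^ 2 ≤ ∑ i, (r i - z i) ^ 2) →
          q = fun i => max (z i - τ) 0) := by
  have : Nonempty (Fin d) := ⟨⟨0, hd⟩⟩
  obtain ⟨τ₀, hτ₀⟩ := exists_sum_threshold_eq z zero_le_one
  refine ⟨⟨τ₀, hτ₀, fun τ hτ => eq_of_sum_threshold_eq z one_pos hτ hτ₀⟩, fun τ hτ => ?_⟩
  have hp : threshold z τ ∈ probSimplex d := ⟨threshold_nonneg z τ, hτ⟩
  have pythagoras : ∀ q ∈ probSimplex d, ∑ i, (threshold z τ i - z i) ^ 2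
      + ∑ i, (q i - threshold z τ i) ^ 2 ≤ ∑ i, (q i - z i) ^ 2 :=
    fun q hq => sum_sq_threshold_sub_add_sum_sq_le z τ hq.1 (hq.2.trans hτ.symm)
  refine ⟨hp, fun q hq => ?_, fun q hq hmin => eq_of_sum_sq_sub_nonpos ?_⟩
  · show ∑ i, (threshold z τ i - z i) ^ 2 ≤ _
    have hdist : 0 ≤ ∑ i, (q i - threshold z τ i) ^ 2 := sum_nonneg fun i _ => sq_nonneg _
    linarith [pythagoras q hq]
  · show ∑ i, (q i - threshold z τ i) ^ 2 ≤ 0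
    linarith [pythagoras q hq, hmin _ hp]
end

section
/- For every α > 1 and every dimension d ≥ 2, there exists z ∈ ℝ^d such that entmax_α(z), the unique maximizer of p·z + H_α(p) over the probability simplex Δ^d, has at least one coordinate equal to exactly zero. In contrast, for every z ∈ ℝ^d, every coordinate of softmax(z) is strictly positive. -/
open Finset

lemma sub_rpow_le_mul_one_sub {x α : ℝ} (hx : 0 ≤ x) (hα : 1 ≤ α) :
    x - x ^ α ≤ (α - 1) * (1 - x) := by
  have bernoulli := one_add_mul_self_le_rpow_one_add (show -1 ≤ x - 1 by linarith) hα
  rw [add_sub_cancel] at bernoulli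
  linarith

lemma single_mem_probSimplex {d : ℕ} (k : Fin d) : Pi.single k 1 ∈ probSimplex d :=
  ⟨fun j => by by_cases h : j = k <;> simp [h], by simp⟩

lemma tsallisEntropy_single {d : ℕ} {α : ℝ} (hα : α ≠ 0) (k : Fin d) :
    tsallisEntropy d α (Pi.single k 1) = 0 := by
  refine mul_eq_zero_of_right _ (sum_eq_zero fun j _ => ?_)
  by_cases h : j = k <;> simp [h, Real.zero_rpow hα]

lemma sum_sub_rpow_le {d : ℕ} {α : ℝ} {q : Fin d → ℝ} (hq : q ∈ probSimplex d) (hα : 1 ≤ α)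
    (k : Fin d) : ∑ j, (q j - q j ^ α) ≤ α * (1 - q k) := by
  obtain ⟨hq0, hq1⟩ := hq
  have hrest : ∑ j ∈ univ.erase k, q j = 1 - q k := by
    linarith [add_sum_erase univ q (mem_univ k)]
  have hk : q k - q k ^ α ≤ (α - 1) * (1 - q k) := sub_rpow_le_mul_one_sub (hq0 k) hα
  have hothers : ∑ j ∈ univ.erase k, (q j - q j ^ α) ≤ 1 - q k :=
    (sum_le_sum fun j _ => sub_le_self _ (Real.rpow_nonneg (hq0 j) α)).trans hrest.le
  rw [← add_sum_erase univ _ (mem_univ k)]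
  linarith

lemma tsallisEntropy_le {d : ℕ} {α : ℝ} {q : Fin d → ℝ} (hq : q ∈ probSimplex d) (hα : 1 < α)
    (k : Fin d) : tsallisEntropy d α q ≤ 1 / (α - 1) * (1 - q k) := by
  have hα0 : 0 < α := by linarith
  have hα1 : 0 < α - 1 := by linarith
  calc tsallisEntropy d α q ≤ 1 / (α * (α - 1)) * (α * (1 - q k)) :=
        mul_le_mul_of_nonneg_left (sum_sub_rpow_le hq hα.le k) (by positivity)
    _ = 1 / (α - 1) * (1 - q k) := by field_simp

lemma isMaxOn_single_tsallis {d : ℕ} {α : ℝ} (hα : 1 < α) (k : Fin d) :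
    IsMaxOn (fun q => ∑ i, q i * (Pi.single k (1 / (α - 1)) : Fin d → ℝ) i +
      tsallisEntropy d α q) (probSimplex d) (Pi.single k 1) := by
  intro q hq
  simp only [Set.mem_ofPred_eq, Pi.single_apply, mul_ite, mul_zero, sum_ite_eq', mem_univ,
    if_true, one_mul, tsallisEntropy_single (by linarith : α ≠ 0), add_zero]
  linarith [tsallisEntropy_le hq hα k]

lemma softmax_pos {ι : Type*} [Fintype ι] [Nonempty ι] (z : ι → ℝ) (i : ι) :
    0 < Real.exp (z i) / ∑ j, Real.exp (z j) :=
  div_pos (Real.exp_pos _) (sum_pos (fun _ _ => Real.exp_pos _) univ_nonempty)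

/-- For every `α > 1` and every dimension `d ≥ 2`, there is a `z ∈ ℝ^d` such that
`entmax_α(z)` — a maximizer of `p·z + H_α(p)` over the probability simplex (which
is unique) — has at least one coordinate exactly zero.  In contrast, every
coordinate of `softmax(z)` is strictly positive for every `z`. -/
theorem entmax_can_be_sparse_softmax_cannot (d : ℕ) (hd : 2 ≤ d) (α : ℝ) (hα : 1 < α) :
    (∃ z : Fin d → ℝ, ∃ p : Fin d → ℝ,
      (p ∈ probSimplex d ∧
        ∀ q ∈ probSimplex d,
          ∑ i, q i * z i + tsallisEntropy d α q ≤
            ∑ i, p i * z i + tsallisEntropy d α p) ∧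
      ∃ i, p i = 0) ∧
    ∀ z : Fin d → ℝ, ∀ i : Fin d, 0 < Real.exp (z i) / ∑ j, Real.exp (z j) := by
  have : Nonempty (Fin d) := ⟨⟨0, by omega⟩⟩
  let k : Fin d := ⟨0, by omega⟩
  let i : Fin d := ⟨1, by omega⟩
  have hik : i ≠ k := by simp [i, k, Fin.ext_iff]
  exact ⟨⟨_, _, ⟨single_mem_probSimplex k, isMaxOn_iff.mp (isMaxOn_single_tsallis hα k)⟩,
    i, Pi.single_eq_of_ne hik 1⟩, softmax_pos⟩
end

section
/- Let z ∈ ℝ^d and 1 < α ≤ α'. If the i-th coordinate of entmax_α(z) is zero, then the i-th coordinate of entmax_{α'}(z) is also zero; i.e., increasing α keeps sparse coordinates sparse. -/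
open Finset

noncomputable def entmaxObjective (d : ℕ) (γ : ℝ) (z q : Fin d → ℝ) : ℝ :=
  ∑ m, q m * z m + tsallisEntropy d γ q

noncomputable def entmaxObjectiveGrad (d : ℕ) (γ : ℝ) (z p : Fin d → ℝ) : Fin d → ℝ :=
  fun m => z m + 1 / (γ * (γ - 1)) * (1 - γ * p m ^ (γ - 1))

def transferMass {d : ℕ} (p : Fin d → ℝ) (k l : Fin d) : Fin d → ℝ :=
  p - Pi.single k (p k) + Pi.single l (p k)

lemma entmaxObjective_eq_sum (d : ℕ) (γ : ℝ) (z : Fin d → ℝ) :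
    entmaxObjective d γ z =
      fun q => ∑ m, (q m * z m + 1 / (γ * (γ - 1)) * (q m - q m ^ γ)) := by
  ext q
  simp only [entmaxObjective, tsallisEntropy, sum_add_distrib, mul_sum]

section

variable {d : ℕ} {γ : ℝ} {z p : Fin d → ℝ}

variable (z p) in
lemma hasFDerivAt_entmaxObjective (hγ : 1 ≤ γ) :
    HasFDerivAt (entmaxObjective d γ z)
      (∑ m, entmaxObjectiveGrad d γ z p m •
        ContinuousLinearMap.proj (R := ℝ) (φ := fun _ : Fin d => ℝ) m) p := by
  rw [entmaxObjective_eq_sum]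
  refine HasFDerivAt.fun_sum fun m _ => ?_
  have hm := hasFDerivAt_apply (𝕜 := ℝ) m p
  convert (hm.mul_const (z m)).add
    ((hm.sub (hm.rpow_const (Or.inr hγ))).const_mul (1 / (γ * (γ - 1)))) using 1
  · rfl
  · simp only [entmaxObjectiveGrad]
    module

lemma IsMaxOn.sum_sub_mul_entmaxObjectiveGrad_nonpos (hγ : 1 ≤ γ)
    (hmax : IsMaxOn (entmaxObjective d γ z) (probSimplex d) p) (hp : p ∈ probSimplex d)
    {q : Fin d → ℝ} (hq : q ∈ probSimplex d) :
    ∑ m, (q m - p m) * entmaxObjectiveGrad d γ z p m ≤ 0 := by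
  have hcone : q - p ∈ posTangentConeAt (probSimplex d) p :=
    sub_mem_posTangentConeAt_of_segment_subset
      ((convex_stdSimplex ℝ (Fin d)).segment_subset hp hq)
  simpa [mul_comm] using hmax.localize.hasFDerivWithinAt_nonpos
    (hasFDerivAt_entmaxObjective z p hγ).hasFDerivWithinAt hcone

lemma transferMass_mem_probSimplex (hp : p ∈ probSimplex d) (k l : Fin d) :
    transferMass p k l ∈ probSimplex d := by
  refine ⟨fun m => ?_, ?_⟩
  · have hk : (Pi.single k (p k) : Fin d → ℝ) m ≤ p m := by
      rcases eq_or_ne m k with rfl | hmk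
      · simp
      · simp [hmk, hp.1 m]
    have hl : 0 ≤ (Pi.single l (p k) : Fin d → ℝ) m := by
      rcases eq_or_ne m l with rfl | hml
      · simp [hp.1 k]
      · simp [hml]
    simp only [transferMass, Pi.add_apply, Pi.sub_apply]
    linarith
  · simp [transferMass, sum_add_distrib, sum_sub_distrib, hp.2]

lemma sum_transferMass_sub_mul (p w : Fin d → ℝ) (k l : Fin d) :
    ∑ m, (transferMass p k l m - p m) * w m = p k * (w l - w k) := by
  simp only [transferMass, Pi.add_apply, Pi.sub_apply, Pi.single_apply, sub_add_eq_add_sub,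
    sub_mul, add_mul, ite_mul, zero_mul, sum_sub_distrib, sum_add_distrib, sum_ite_eq', mem_univ,
    if_true]
  ring

lemma IsMaxOn.mul_sub_le_rpow_sub_rpow (hγ : 1 < γ)
    (hmax : IsMaxOn (entmaxObjective d γ z) (probSimplex d) p) (hp : p ∈ probSimplex d)
    {k : Fin d} (hk : 0 < p k) (l : Fin d) :
    (γ - 1) * (z l - z k) ≤ p l ^ (γ - 1) - p k ^ (γ - 1) := by
  have h := hmax.sum_sub_mul_entmaxObjectiveGrad_nonpos hγ.le hp
    (transferMass_mem_probSimplex hp k l)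
  rw [sum_transferMass_sub_mul] at h
  have hgrad := nonpos_of_mul_nonpos_right h hk
  have hγ1 : 0 < γ - 1 := sub_pos.mpr hγ
  calc (γ - 1) * (z l - z k)
      = (γ - 1) * (entmaxObjectiveGrad d γ z p l - entmaxObjectiveGrad d γ z p k)
        + (p l ^ (γ - 1) - p k ^ (γ - 1)) := by
        simp only [entmaxObjectiveGrad]
        field_simp
        ring
    _ ≤ p l ^ (γ - 1) - p k ^ (γ - 1) :=
        add_le_of_nonpos_left (mul_nonpos_of_nonneg_of_nonpos hγ1.le hgrad)

lemma exists_lt_of_mem_probSimplex {q : Fin d → ℝ} (hp : p ∈ probSimplex d)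
    (hq : q ∈ probSimplex d) {i : Fin d} (hi : p i < q i) : ∃ j, q j < p j := by
  by_contra! h
  linarith [sum_lt_sum (fun j _ => h j) ⟨i, mem_univ i, hi⟩, hp.2, hq.2]

end

/-- Let `z ∈ ℝ^d` and `1 < α ≤ α'`.  If the `i`-th coordinate of `entmax_α(z)`
(the maximizer of `p·z + H_α(p)` over the simplex) is zero, then the `i`-th
coordinate of `entmax_{α'}(z)` is also zero: increasing `α` keeps sparse
coordinates sparse. -/
theorem entmax_sparsity_monotone (d : ℕ) (α α' : ℝ) (hα : 1 < α) (hαα' : α ≤ α')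
    (z : Fin d → ℝ) (p p' : Fin d → ℝ)
    (hp : p ∈ probSimplex d ∧
      ∀ q ∈ probSimplex d,
        ∑ i, q i * z i + tsallisEntropy d α q ≤ ∑ i, p i * z i + tsallisEntropy d α p)
    (hp' : p' ∈ probSimplex d ∧
      ∀ q ∈ probSimplex d,
        ∑ i, q i * z i + tsallisEntropy d α' q ≤ ∑ i, p' i * z i + tsallisEntropy d α' p')
    (i : Fin d) (hi : p i = 0) :
    p' i = 0 := by
  obtain ⟨hpS, hpmax⟩ := hp
  obtain ⟨hp'S, hp'max⟩ := hp'
  by_contra hne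
  have hp'i : 0 < p' i := (hp'S.1 i).lt_of_ne' hne
  obtain ⟨j, hj⟩ := exists_lt_of_mem_probSimplex hpS hp'S (hi ▸ hp'i)
  have hpj : 0 < p j := (hp'S.1 j).trans_lt hj
  have hA := (isMaxOn_iff.mpr hpmax).mul_sub_le_rpow_sub_rpow hα hpS hpj i
  have hB := (isMaxOn_iff.mpr hp'max).mul_sub_le_rpow_sub_rpow (hα.trans_le hαα') hp'S hp'i j
  rw [hi, Real.zero_rpow (sub_pos.mpr hα).ne'] at hA
  have hpj_pow : 0 < p j ^ (α - 1) := Real.rpow_pos_of_pos hpj _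
  have hz : 0 < z j - z i := by nlinarith
  have : p j ^ (α - 1) < p j ^ (α - 1) := calc
    p j ^ (α - 1) ≤ (α - 1) * (z j - z i) := by linarith
    _ ≤ (α' - 1) * (z j - z i) := by gcongr
    _ ≤ p' j ^ (α' - 1) - p' i ^ (α' - 1) := hB
    _ < p' j ^ (α' - 1) := sub_lt_self _ (Real.rpow_pos_of_pos hp'i _)
    _ ≤ p j ^ (α' - 1) := by gcongr; exacts [hp'S.1 j, by linarith]
    _ ≤ p j ^ (α - 1) :=
        Real.rpow_le_rpow_of_exponent_ge hpj (mem_Icc_of_mem_stdSimplex hpS j).2 (by linarith)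
  exact lt_irrefl _ this
end

section
/- Let z ∈ ℝ^d, let I ⊆ (1, ∞) be an open interval, and let τ : I → ℝ be a differentiable function such that for all α ∈ I the vector p(α) with coordinates p_i(α) = [(α−1)(z_i − τ(α))]_+^{1/(α−1)} satisfies Σ_i p_i(α) = 1, and such that the support set {i : p_i(α) > 0} is constant on I with z_i − τ(α) > 0 for every i in the support. Then for all α ∈ I, τ'(α) = (1/(α−1)² + H_S(p(α))/(α−1)) / Σ_i p_i(α)^{2−α}, where H_S(p) = −Σ_j p_j log p_j (with 0 log 0 = 0) and the sum Σ_i p_i(α)^{2−α} ranges over the support. -/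
/-!
On the support `S`, `p_i(β) ^ (β - 1) = (β - 1) (z_i - τ(β)) > 0`, so each `p_i` is differentiable at
`α`, with `p_i' = p_i / (α - 1)² - p_i log p_i / (α - 1) - τ'(α) p_i ^ (2 - α)`.
Since `∑_{i ∈ S} p_i ≡ 1` on the interval, these derivatives sum to zero, and that linear equation
in `τ'(α)` is solved by the stated formula.
-/

open Real Finset Filter

noncomputable def entmaxWeight (α t : ℝ) : ℝ := max ((α - 1) * t) 0 ^ (1 / (α - 1))

theorem entmaxWeight_nonneg (α t : ℝ) : 0 ≤ entmaxWeight α t :=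
  rpow_nonneg (le_max_right _ _) _

theorem entmaxWeight_of_pos {α t : ℝ} (hα : 1 < α) (ht : 0 < t) :
    entmaxWeight α t = ((α - 1) * t) ^ (1 / (α - 1)) := by
  rw [entmaxWeight, max_eq_left (mul_pos (sub_pos.2 hα) ht).le]

theorem rpow_one_div_sub_one_rpow_two_sub {x : ℝ} (hx : 0 < x) {α : ℝ} (hα : α ≠ 1) :
    (x ^ (1 / (α - 1))) ^ (2 - α) = x ^ (1 / (α - 1)) / x := by
  rw [← rpow_mul hx.le, ← rpow_sub_one hx.ne']
  congr 1
  field_simp [sub_ne_zero.2 hα]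
  ring

theorem HasDerivAt.rpow_one_div_sub_one {u : ℝ → ℝ} {u' α : ℝ} (hu : HasDerivAt u u' α)
    (hpos : 0 < u α) (hα : 1 < α) :
    HasDerivAt (fun β => u β ^ (1 / (β - 1)))
      (u' * u α ^ (1 / (α - 1)) / ((α - 1) * u α) +
        negMulLog (u α ^ (1 / (α - 1))) / (α - 1)) α := by
  have hs : α - 1 ≠ 0 := sub_ne_zero.2 hα.ne'
  have hexp : HasDerivAt (fun β => 1 / (β - 1)) (-1 / (α - 1) ^ 2) α :=
    ((hasDerivAt_const α 1).div ((hasDerivAt_id' α).sub_const 1) hs).congr_deriv (by ring)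
  convert hu.rpow hexp hpos using 1
  rw [rpow_sub_one hpos.ne', negMulLog, log_rpow hpos]
  field_simp

theorem hasDerivAt_entmaxWeight {τ : ℝ → ℝ} {τ' α z : ℝ} (hτ : HasDerivAt τ τ' α)
    (hα : 1 < α) (hz : 0 < z - τ α) :
    HasDerivAt (fun β => entmaxWeight β (z - τ β))
      (entmaxWeight α (z - τ α) / (α - 1) ^ 2 + negMulLog (entmaxWeight α (z - τ α)) / (α - 1)
        - τ' * entmaxWeight α (z - τ α) ^ (2 - α)) α := by
  have hs : 0 < α - 1 := sub_pos.2 hα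
  have hu : HasDerivAt (fun β => (β - 1) * (z - τ β)) ((z - τ α) - (α - 1) * τ') α :=
    (((hasDerivAt_id' α).sub_const 1).mul ((hasDerivAt_const α z).fun_sub hτ)).congr_deriv (by ring)
  have hlocal : (fun β => entmaxWeight β (z - τ β)) =ᶠ[nhds α]
      fun β => ((β - 1) * (z - τ β)) ^ (1 / (β - 1)) := by
    have hcont : ContinuousAt (fun β => z - τ β) α := continuousAt_const.sub hτ.continuousAt
    filter_upwards [lt_mem_nhds hα, hcont.eventually (lt_mem_nhds hz)] with β hβ hβz
    exact entmaxWeight_of_pos hβ hβz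
  have hderiv := (hu.rpow_one_div_sub_one (mul_pos hs hz) hα).congr_of_eventuallyEq hlocal
  refine hderiv.congr_deriv ?_
  rw [entmaxWeight_of_pos hα hz, rpow_one_div_sub_one_rpow_two_sub (mul_pos hs hz) hα.ne']
  field_simp
  ring

/-- Let `z ∈ ℝ^d`, let `I = (a,b) ⊆ (1,∞)` be an open interval, and let
`τ : I → ℝ` be differentiable, such that for all `α ∈ I` the vector `p(α)` with
`p_i(α) = [(α−1)(z_i − τ(α))]_+^{1/(α−1)}` sums to one, the support
`{i : p_i(α) > 0}` equals a fixed set `S` on `I`, and `z_i − τ(α) > 0` for every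
`i ∈ S`.  Then for all `α ∈ I`,
`τ'(α) = (1/(α−1)² + H_S(p(α))/(α−1)) / Σ_{i ∈ S} p_i(α)^{2−α}`,
where `H_S(p) = −Σ_j p_j log p_j` (with `0 log 0 = 0`). -/
theorem entmax_threshold_deriv (d : ℕ) (z : Fin d → ℝ) (a b : ℝ) (ha : 1 ≤ a)
    (τ : ℝ → ℝ) (hτ : ∀ α ∈ Set.Ioo a b, DifferentiableAt ℝ τ α)
    (p : ℝ → Fin d → ℝ)
    (hp : ∀ α i, p α i = max ((α - 1) * (z i - τ α)) 0 ^ (1 / (α - 1)))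
    (hsum : ∀ α ∈ Set.Ioo a b, ∑ i, p α i = 1)
    (S : Finset (Fin d))
    (hsupp : ∀ α ∈ Set.Ioo a b, ∀ i, i ∈ S ↔ 0 < p α i)
    (hpos : ∀ α ∈ Set.Ioo a b, ∀ i ∈ S, 0 < z i - τ α) :
    ∀ α ∈ Set.Ioo a b,
      deriv τ α =
        (1 / (α - 1) ^ 2 + (∑ j, Real.negMulLog (p α j)) / (α - 1)) /
          ∑ i ∈ S, p α i ^ (2 - α) := by
  have hpw : p = fun β i => entmaxWeight β (z i - τ β) := funext fun β => funext (hp β)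
  subst hpw
  intro α hα
  have h1α : 1 < α := ha.trans_lt hα.1
  have hzero : ∀ β ∈ Set.Ioo a b, ∀ i ∉ S, entmaxWeight β (z i - τ β) = 0 := fun β hβ i hi =>
    le_antisymm (not_lt.1 (mt (hsupp β hβ i).2 hi)) (entmaxWeight_nonneg _ _)
  have hsumS : ∀ β ∈ Set.Ioo a b, ∑ i ∈ S, entmaxWeight β (z i - τ β) = 1 := fun β hβ =>
    (sum_subset (subset_univ S) fun i _ hi => hzero β hβ i hi).trans (hsum β hβ)
  have hentropy : ∑ i ∈ S, negMulLog (entmaxWeight α (z i - τ α)) =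
      ∑ i, negMulLog (entmaxWeight α (z i - τ α)) :=
    sum_subset (subset_univ S) fun i _ hi => by rw [hzero α hα i hi, negMulLog_zero]
  have hderiv_sum := HasDerivAt.fun_sum fun i hi =>
    hasDerivAt_entmaxWeight (hτ α hα).hasDerivAt h1α (hpos α hα i hi)
  have hderiv_const : HasDerivAt (fun β => ∑ i ∈ S, entmaxWeight β (z i - τ β)) 0 α :=
    (hasDerivAt_const α 1).congr_of_eventuallyEq <|
      eventually_of_mem (isOpen_Ioo.mem_nhds hα) hsumS
  have hderiv_sum_eq_zero := hderiv_sum.unique hderiv_const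
  rw [sum_sub_distrib, sum_add_distrib, ← sum_div, ← sum_div, ← mul_sum, hsumS α hα,
    hentropy] at hderiv_sum_eq_zero
  have hQ : 0 < ∑ i ∈ S, entmaxWeight α (z i - τ α) ^ (2 - α) :=
    sum_pos (fun i hi => rpow_pos_of_pos ((hsupp α hα i).1 hi) _)
      (nonempty_of_sum_ne_zero (by rw [hsumS α hα]; exact one_ne_zero))
  rw [eq_div_iff hQ.ne']
  linear_combination -hderiv_sum_eq_zero
end

section
/- (Proposition 1, case α > 1.) Let z ∈ ℝ^d, let I ⊆ (1, ∞) be an open interval, and let τ : I → ℝ be a differentiable function such that for all α ∈ I the vector p(α) with coordinates p_i(α) = [(α−1)(z_i − τ(α))]_+^{1/(α−1)} satisfies Σ_i p_i(α) = 1, and such that the support set {i : p_i(α) > 0} is constant on I with z_i − τ(α) > 0 for every i in the support. Then for each i in the support and all α ∈ I, d p_i(α)/dα = (p_i(α) − p̃_i(α))/(α−1)² − (p_i(α) log p_i(α) + p̃_i(α) H_S(p(α)))/(α−1), where p̃_i(α) = p_i(α)^{2−α} / Σ_j p_j(α)^{2−α} (sums over the support) and H_S(p) = −Σ_j p_j log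 p_j with 0 log 0 = 0. For each i outside the support, d p_i(α)/dα = 0. -/
/-!
On the support, `p_i(α) = ((α - 1)(z_i - τ(α)))^{1/(α-1)}` is differentiable in `α`, and the
chain rule gives `p_i' = p_i / (α-1)² - τ' p_i^{2-α} - p_i log p_i / (α-1)`, in which the
derivative `τ'` of the threshold is still unknown. Since `Σ_i p_i = 1` on the interval,
`Σ_i p_i' = 0`, which determines `τ' Σ_j p_j^{2-α} = 1/(α-1)² + H_S(p)/(α-1)`; substituting
this back gives the formula. Off the support `p_i` vanishes on the whole interval.
-/

open Filter Topology Real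

noncomputable def entmaxCoord (u : ℝ) (τ : ℝ → ℝ) (β : ℝ) : ℝ :=
  max ((β - 1) * (u - τ β)) 0 ^ (1 / (β - 1))

theorem entmaxCoord_nonneg (u : ℝ) (τ : ℝ → ℝ) (β : ℝ) : 0 ≤ entmaxCoord u τ β :=
  rpow_nonneg (le_max_right _ _) _

theorem hasDerivAt_entmaxCoord {u t α : ℝ} {τ : ℝ → ℝ} (hτ : HasDerivAt τ t α)
    (hG : 0 < (α - 1) * (u - τ α)) :
    HasDerivAt (entmaxCoord u τ)
      (entmaxCoord u τ α / (α - 1) ^ 2 - t * entmaxCoord u τ α ^ (2 - α)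
        - entmaxCoord u τ α * log (entmaxCoord u τ α) / (α - 1)) α := by
  set G : ℝ → ℝ := fun β => (β - 1) * (u - τ β)
  have hα : α - 1 ≠ 0 := fun h => by simp [h] at hG
  have hGd : HasDerivAt G (1 * (u - τ α) + (α - 1) * (0 - t)) α :=
    ((hasDerivAt_id α).sub_const 1).mul ((hasDerivAt_const α u).sub hτ)
  have hev : entmaxCoord u τ =ᶠ[𝓝 α] fun β => G β ^ (β - 1)⁻¹ := by
    filter_upwards [hGd.continuousAt.eventually (lt_mem_nhds hG)] with β hβ
    rw [entmaxCoord, max_eq_left hβ.le, one_div]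
  set q := entmaxCoord u τ α
  have hq : q = G α ^ (α - 1)⁻¹ := hev.eq_of_nhds
  have hqpos : 0 < q := hq ▸ rpow_pos_of_pos hG _
  have hGq : G α = q ^ (α - 1) := by
    rw [hq, ← rpow_mul hG.le, inv_mul_cancel₀ hα, rpow_one]
  have hq2 : q ^ (2 - α) = q / G α := by
    rw [show (2 : ℝ) - α = 1 - (α - 1) by ring, rpow_sub hqpos, rpow_one, hGq]
  have hqG : G α ^ ((α - 1)⁻¹ - 1) = q / G α := by
    rw [rpow_sub hG, rpow_one, ← hq]
  have hlog : log (G α) = (α - 1) * log q := by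
    rw [hGq, log_rpow hqpos]
  have hexp : HasDerivAt (fun β : ℝ => (β - 1)⁻¹) (-1 / (α - 1) ^ 2) α :=
    ((hasDerivAt_id α).sub_const 1).inv hα
  refine ((hGd.rpow hexp hG).congr_of_eventuallyEq hev).congr_deriv ?_
  rw [← hq, hqG, hlog, hq2]
  have hu : u - τ α ≠ 0 := right_ne_zero_of_mul hG.ne'
  simp only [G]
  field_simp
  ring

theorem sum_eq_zero_of_hasDerivAt_of_sum_eventuallyEq_const {𝕜 F ι : Type*}
    [NontriviallyNormedField 𝕜] [NormedAddCommGroup F] [NormedSpace 𝕜 F]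
    {s : Finset ι} {f : ι → 𝕜 → F} {f' : ι → F} {x : 𝕜} {c : F}
    (hf : ∀ i ∈ s, HasDerivAt (f i) (f' i) x)
    (hc : (fun y => ∑ i ∈ s, f i y) =ᶠ[𝓝 x] fun _ => c) :
    ∑ i ∈ s, f' i = 0 :=
  (HasDerivAt.fun_sum hf).unique ((hasDerivAt_const x c).congr_of_eventuallyEq hc)

theorem entmax_deriv_eq_of_sum_deriv_eq_zero {ι : Type*} {S : Finset ι} {q : ι → ℝ}
    {α t : ℝ} (hα : α - 1 ≠ 0) (hq : ∑ j ∈ S, q j = 1)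
    (hT : ∑ j ∈ S, q j ^ (2 - α) ≠ 0)
    (h : ∑ j ∈ S, (q j / (α - 1) ^ 2 - t * q j ^ (2 - α) - q j * log (q j) / (α - 1)) = 0)
    (i : ι) :
    q i / (α - 1) ^ 2 - t * q i ^ (2 - α) - q i * log (q i) / (α - 1) =
      (q i - q i ^ (2 - α) / ∑ j ∈ S, q j ^ (2 - α)) / (α - 1) ^ 2 -
        (q i * log (q i) + (q i ^ (2 - α) / ∑ j ∈ S, q j ^ (2 - α)) *
          ∑ j ∈ S, negMulLog (q j)) / (α - 1) := by
  have ht : t * ∑ j ∈ S, q j ^ (2 - α) =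
      1 / (α - 1) ^ 2 + (∑ j ∈ S, negMulLog (q j)) / (α - 1) := by
    simp only [Finset.sum_sub_distrib, ← Finset.sum_div, ← Finset.mul_sum, hq] at h
    simp only [negMulLog, neg_mul, Finset.sum_neg_distrib, neg_div]
    linarith
  set T := ∑ j ∈ S, q j ^ (2 - α)
  set H := ∑ j ∈ S, negMulLog (q j)
  field_simp at ht ⊢
  linear_combination -q i ^ (2 - α) * ht

/-- (Proposition 1, case `α > 1`.)  Let `z ∈ ℝ^d`, let `I = (a,b) ⊆ (1,∞)` be an
open interval, and let `τ : I → ℝ` be differentiable, such that for all `α ∈ I`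
the vector `p(α)` with `p_i(α) = [(α−1)(z_i − τ(α))]_+^{1/(α−1)}` sums to one,
the support `{i : p_i(α) > 0}` equals a fixed set `S` on `I`, and
`z_i − τ(α) > 0` for every `i ∈ S`.  Then for each `i ∈ S` and `α ∈ I`,
`d p_i(α)/dα = (p_i − p̃_i)/(α−1)² − (p_i log p_i + p̃_i H_S(p(α)))/(α−1)`,
where `p̃_i(α) = p_i(α)^{2−α} / Σ_{j ∈ S} p_j(α)^{2−α}` and
`H_S(p) = −Σ_j p_j log p_j` (with `0 log 0 = 0`); and for each `i ∉ S`,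
`d p_i(α)/dα = 0`. -/
theorem entmax_jacobian_wrt_alpha (d : ℕ) (z : Fin d → ℝ) (a b : ℝ) (ha : 1 ≤ a)
    (τ : ℝ → ℝ) (hτ : ∀ α ∈ Set.Ioo a b, DifferentiableAt ℝ τ α)
    (p : ℝ → Fin d → ℝ)
    (hp : ∀ α i, p α i = max ((α - 1) * (z i - τ α)) 0 ^ (1 / (α - 1)))
    (hsum : ∀ α ∈ Set.Ioo a b, ∑ i, p α i = 1)
    (S : Finset (Fin d))
    (hsupp : ∀ α ∈ Set.Ioo a b, ∀ i, i ∈ S ↔ 0 < p α i)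
    (hpos : ∀ α ∈ Set.Ioo a b, ∀ i ∈ S, 0 < z i - τ α) :
    ∀ α ∈ Set.Ioo a b,
      (∀ i ∈ S,
        HasDerivAt (fun β : ℝ => p β i)
          ((p α i - p α i ^ (2 - α) / ∑ j ∈ S, p α j ^ (2 - α)) / (α - 1) ^ 2 -
            (p α i * Real.log (p α i) +
              (p α i ^ (2 - α) / ∑ j ∈ S, p α j ^ (2 - α)) *
                (∑ j, Real.negMulLog (p α j))) / (α - 1)) α) ∧
      ∀ i ∉ S, HasDerivAt (fun β : ℝ => p β i) 0 α := by
  obtain rfl : p = fun β i => entmaxCoord (z i) τ β := funext₂ hp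
  intro α hα
  have hα1 : 0 < α - 1 := by linarith [hα.1]
  have hI : Set.Ioo a b ∈ 𝓝 α := Ioo_mem_nhds hα.1 hα.2
  have hoff : ∀ β ∈ Set.Ioo a b, ∀ i ∉ S, entmaxCoord (z i) τ β = 0 := fun β hβ i hi =>
    (entmaxCoord_nonneg _ _ _).eq_of_not_lt' (mt (hsupp β hβ i).2 hi)
  have hon : ∀ i ∈ S, HasDerivAt (entmaxCoord (z i) τ) _ α := fun i hi =>
    hasDerivAt_entmaxCoord (hτ α hα).hasDerivAt (mul_pos hα1 (hpos α hα i hi))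
  have hsumS : ∀ β ∈ Set.Ioo a b, ∑ i ∈ S, entmaxCoord (z i) τ β = 1 := fun β hβ =>
    (Finset.sum_subset S.subset_univ fun i _ hi => hoff β hβ i hi).trans (hsum β hβ)
  have hT : ∑ j ∈ S, entmaxCoord (z j) τ α ^ (2 - α) ≠ 0 := by
    refine (Finset.sum_pos (fun j hj => rpow_pos_of_pos ((hsupp α hα j).1 hj) _) ?_).ne'
    exact Finset.nonempty_of_sum_ne_zero (by rw [hsumS α hα]; exact one_ne_zero)
  have hH : ∑ j, negMulLog (entmaxCoord (z j) τ α) =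
      ∑ j ∈ S, negMulLog (entmaxCoord (z j) τ α) :=
    (Finset.sum_subset S.subset_univ fun j _ hj => by rw [hoff α hα j hj, negMulLog_zero]).symm
  refine ⟨fun i hi => ?_, fun i hi => ?_⟩
  · rw [hH, ← entmax_deriv_eq_of_sum_deriv_eq_zero hα1.ne' (hsumS α hα) hT
      (sum_eq_zero_of_hasDerivAt_of_sum_eventuallyEq_const hon
        (eventually_of_mem hI hsumS))]
    exact hon i hi
  · exact (hasDerivAt_const α 0).congr_of_eventuallyEq
      (eventually_of_mem hI fun β hβ => hoff β hβ i hi)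
end

section
/- (Proposition 1, case α = 1, via L'Hôpital.) Fix a probability vector p ∈ Δ^d with all coordinates strictly positive, and define p̃_i(α) = p_i^{2−α} / Σ_j p_j^{2−α} and H_S(p) = −Σ_j p_j log p_j. Then for each i, the limit as α → 1⁺ of (p_i − p̃_i(α))/(α−1)² − (p_i log p_i + p̃_i(α) H_S(p))/(α−1) exists and equals (−p_i log² p_i + p_i Σ_j p_j log² p_j)/2. -/
/-!
Write `t = α - 1` and `l_j = log p_j`, so that `p_j^{2-α} = p_j e^{-t l_j}`. Using `Σ_j p_j = 1`,
the quantity times `Σ_j p_j^{2-α}` is `Σ_j p_i p_j G(l_i, l_j, t) / t²` with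
`G(a, b, t) = (1 - t a) e^{-t b} - (1 - t b) e^{-t a}`. Each `G(a, b, ·)` vanishes to second
order at `0` with `∂²G/∂t²(0) = b² - a²`, so L'Hôpital gives `G(a, b, t) / t² → (b² - a²) / 2`,
while `Σ_j p_j^{2-α} → 1`.
-/

open Real Filter Topology

theorem tendsto_div_sub_sq_of_hasDerivAt {f f' : ℝ → ℝ} {a c : ℝ}
    (hf : ∀ᶠ x in 𝓝 a, HasDerivAt f (f' x) x) (hf' : HasDerivAt f' c a)
    (hfa : f a = 0) (hf'a : f' a = 0) :
    Tendsto (fun x => f x / (x - a) ^ 2) (𝓝[≠] a) (𝓝 (c / 2)) := by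
  have hsq : ∀ x, HasDerivAt (fun x => (x - a) ^ 2) (2 * (x - a)) x := fun x => by
    simpa using ((hasDerivAt_id' x).sub_const a).fun_pow 2
  refine HasDerivAt.lhopital_zero_nhdsNE (nhdsWithin_le_nhds hf) (.of_forall hsq) ?_ ?_ ?_ ?_
  · filter_upwards [self_mem_nhdsWithin] with x hx
    exact mul_ne_zero two_ne_zero (sub_ne_zero.mpr hx)
  · simpa [hfa] using hf.self_of_nhds.continuousAt.continuousWithinAt.tendsto
  · simpa using (hsq a).continuousAt.continuousWithinAt.tendsto (s := {a}ᶜ)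
  · refine (hf'.tendsto_slope.div_const 2).congr fun x => ?_
    rw [slope_def_field, hf'a, sub_zero, div_div, mul_comm]

theorem tendsto_one_sub_mul_exp_neg_sub_div_sq (a b : ℝ) :
    Tendsto (fun t => ((1 - t * a) * exp (-(t * b)) - (1 - t * b) * exp (-(t * a))) / t ^ 2)
      (𝓝[≠] 0) (𝓝 ((b ^ 2 - a ^ 2) / 2)) := by
  have hexp : ∀ c t : ℝ, HasDerivAt (fun t => exp (-(t * c))) (-c * exp (-(t * c))) t :=
    fun c t => by simpa [mul_comm] using ((hasDerivAt_id' t).mul_const c).neg.exp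
  have hlin : ∀ c t : ℝ, HasDerivAt (fun t => 1 - t * c) (-c) t := fun c t => by
    simpa using ((hasDerivAt_id' t).mul_const c).const_sub 1
  set g' : ℝ → ℝ := fun t => -a * exp (-(t * b)) + (1 - t * a) * (-b * exp (-(t * b)))
    - (-b * exp (-(t * a)) + (1 - t * b) * (-a * exp (-(t * a))))
  have hg : ∀ t, HasDerivAt
      (fun t => (1 - t * a) * exp (-(t * b)) - (1 - t * b) * exp (-(t * a))) (g' t) t :=
    fun t => ((hlin a t).mul (hexp b t)).sub ((hlin b t).mul (hexp a t))
  have hg' : HasDerivAt g' (b ^ 2 - a ^ 2) 0 := by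
    refine ((((hexp b 0).const_mul (-a)).add ((hlin a 0).mul ((hexp b 0).const_mul (-b)))).sub
      (((hexp a 0).const_mul (-b)).add ((hlin b 0).mul ((hexp a 0).const_mul (-a))))).congr_deriv ?_
    simp only [zero_mul, neg_zero, exp_zero, sub_zero]
    ring
  simpa using tendsto_div_sub_sq_of_hasDerivAt (.of_forall hg) hg' (by simp) (by simp [g']; ring)

theorem rpow_two_sub_eq_mul_exp {x : ℝ} (hx : 0 < x) (α : ℝ) :
    x ^ (2 - α) = x * exp (-((α - 1) * log x)) := by
  rw [rpow_def_of_pos hx, ← exp_log hx, log_exp, ← exp_add]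
  ring_nf

theorem tendsto_sub_nhdsGT_nhdsNE_zero (a : ℝ) : Tendsto (fun x => x - a) (𝓝[>] a) (𝓝[≠] 0) := by
  refine tendsto_nhdsWithin_of_tendsto_nhds_of_eventually_within _ ?_ ?_
  · exact ((continuous_sub_right a).tendsto' a 0 (sub_self a)).mono_left nhdsWithin_le_nhds
  · filter_upwards [self_mem_nhdsWithin] with x hx using sub_ne_zero.mpr (ne_of_gt hx)

theorem sub_div_sq_sub_div_eq_sum_div {ι : Type*} [Fintype ι] {p : ι → ℝ}
    (hpos : ∀ j, 0 < p j) (hsum : ∑ j, p j = 1) (i : ι) {α : ℝ} (hα : α ≠ 1) :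
    (p i - p i ^ (2 - α) / ∑ j, p j ^ (2 - α)) / (α - 1) ^ 2 -
        (p i * log (p i) + (p i ^ (2 - α) / ∑ j, p j ^ (2 - α)) * (-∑ j, p j * log (p j))) /
          (α - 1) =
      (∑ j, p i * p j * (((1 - (α - 1) * log (p i)) * exp (-((α - 1) * log (p j))) -
          (1 - (α - 1) * log (p j)) * exp (-((α - 1) * log (p i)))) / (α - 1) ^ 2)) /
        ∑ j, p j * exp (-((α - 1) * log (p j))) := by
  simp only [rpow_two_sub_eq_mul_exp (hpos _)]
  set t := α - 1
  have ht : t ≠ 0 := sub_ne_zero.mpr hα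
  have hZ : 0 < ∑ j, p j * exp (-(t * log (p j))) :=
    Finset.sum_pos (fun j _ => mul_pos (hpos j) (exp_pos _)) ⟨i, Finset.mem_univ i⟩
  have hexpand : ∑ j, p i * p j * (((1 - t * log (p i)) * exp (-(t * log (p j))) -
        (1 - t * log (p j)) * exp (-(t * log (p i)))) / t ^ 2) =
      (p i * (1 - t * log (p i)) * ∑ j, p j * exp (-(t * log (p j))) -
        p i * exp (-(t * log (p i))) * (∑ j, p j - t * ∑ j, p j * log (p j))) / t ^ 2 := by
    simp only [Finset.mul_sum, ← Finset.sum_sub_distrib, Finset.sum_div]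
    exact Finset.sum_congr rfl fun j _ => by ring
  rw [hexpand, hsum]
  field_simp
  ring

/-- (Proposition 1, case `α = 1`, via L'Hôpital.)  Fix a probability vector `p`
with strictly positive coordinates and set `p̃_i(α) = p_i^{2−α} / Σ_j p_j^{2−α}`
and `H_S(p) = −Σ_j p_j log p_j`.  Then for each `i`, as `α → 1⁺`,
`(p_i − p̃_i(α))/(α−1)² − (p_i log p_i + p̃_i(α) H_S(p))/(α−1)` tends to
`(−p_i log² p_i + p_i Σ_j p_j log² p_j)/2`. -/
theorem entmax_jacobian_alpha_one_limit (d : ℕ) (p : Fin d → ℝ)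
    (hpos : ∀ j, 0 < p j) (hsum : ∑ j, p j = 1) (i : Fin d) :
    Filter.Tendsto
      (fun α : ℝ =>
        (p i - p i ^ (2 - α) / ∑ j, p j ^ (2 - α)) / (α - 1) ^ 2 -
          (p i * Real.log (p i) +
            (p i ^ (2 - α) / ∑ j, p j ^ (2 - α)) *
              (-∑ j, p j * Real.log (p j))) / (α - 1))
      (nhdsWithin 1 (Set.Ioi 1))
      (nhds ((-(p i * Real.log (p i) ^ 2) + p i * ∑ j, p j * Real.log (p j) ^ 2) / 2)) := by
  have hpair : ∀ j, Tendsto (fun α => ((1 - (α - 1) * log (p i)) * exp (-((α - 1) * log (p j)))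
      - (1 - (α - 1) * log (p j)) * exp (-((α - 1) * log (p i)))) / (α - 1) ^ 2)
      (𝓝[>] 1) (𝓝 ((log (p j) ^ 2 - log (p i) ^ 2) / 2)) := fun j =>
    (tendsto_one_sub_mul_exp_neg_sub_div_sq (log (p i)) (log (p j))).comp
      (tendsto_sub_nhdsGT_nhdsNE_zero 1)
  have hZ : Tendsto (fun α => ∑ j, p j * exp (-((α - 1) * log (p j)))) (𝓝[>] 1) (𝓝 1) := by
    have hcont : Continuous (fun α => ∑ j, p j * exp (-((α - 1) * log (p j)))) := by fun_prop
    simpa [hsum] using hcont.continuousWithinAt.tendsto (x := 1) (s := Set.Ioi 1)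
  have hlim := (tendsto_finsetSum Finset.univ fun j _ => (hpair j).const_mul (p i * p j)).div
    hZ one_ne_zero
  have hval : (∑ j, p i * p j * ((log (p j) ^ 2 - log (p i) ^ 2) / 2)) / 1
      = (-(p i * log (p i) ^ 2) + p i * ∑ j, p j * log (p j) ^ 2) / 2 := by
    have hterm : ∀ j, p i * p j * ((log (p j) ^ 2 - log (p i) ^ 2) / 2) =
        (p i * (p j * log (p j) ^ 2) - p i * log (p i) ^ 2 * p j) / 2 := fun j => by ring
    simp only [div_one, hterm, ← Finset.sum_div, Finset.sum_sub_distrib, ← Finset.mul_sum, hsum]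
    ring
  rw [← hval]
  refine hlim.congr' ?_
  filter_upwards [self_mem_nhdsWithin] with α hα
  exact (sub_div_sq_sub_div_eq_sum_div hpos hsum i (ne_of_gt hα)).symm
end

section
/- Let α > 1 and z ∈ ℝ^d. The function φ(τ) = Σ_i [(α−1)(z_i − τ)]_+^{1/(α−1)} is continuous and non-increasing on ℝ, is strictly decreasing on {τ : φ(τ) > 0}, tends to +∞ as τ → −∞, and equals 0 for τ ≥ max_i z_i; consequently there is exactly one τ* ∈ ℝ with φ(τ*) = 1. -/
/-!
Each summand `τ ↦ [(α−1)(z_i − τ)]_+^{1/(α−1)}` is a continuous non-increasing function which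
vanishes for `τ ≥ z_i` and is strictly decreasing where positive; a sum is positive only where
one of its summands is. Existence of `τ*` is the intermediate value theorem between a point far
to the left, where `φ ≥ 1`, and `max_i z_i`, where `φ = 0`; uniqueness is strict monotonicity on
`{φ > 0}`, which contains every solution of `φ = 1`.
-/

open Filter Finset

/-- The paper's `φ` is `entmaxNormalizer (α − 1) (1 / (α − 1)) z`. -/
noncomputable def entmaxNormalizer {ι : Type*} [Fintype ι] (a p : ℝ) (z : ι → ℝ) (τ : ℝ) : ℝ :=
  ∑ i, max (a * (z i - τ)) 0 ^ p

namespace entmaxNormalizer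

variable {ι : Type*} [Fintype ι] {a p : ℝ} {z : ι → ℝ}

theorem posPart_rpow_antitone (ha : 0 ≤ a) (hp : 0 ≤ p) (c : ℝ) :
    Antitone fun τ : ℝ => max (a * (c - τ)) 0 ^ p := fun _ _ hστ =>
  Real.rpow_le_rpow (le_max_right _ _)
    (max_le_max (mul_le_mul_of_nonneg_left (by linarith) ha) le_rfl) hp

theorem continuous (hp : 0 ≤ p) : Continuous (entmaxNormalizer a p z) :=
  continuous_finsetSum _ fun _ _ =>
    ((continuous_const.mul (continuous_const.sub continuous_id)).max continuous_const).rpow_const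
      fun _ => Or.inr hp

theorem antitone (ha : 0 ≤ a) (hp : 0 ≤ p) : Antitone (entmaxNormalizer a p z) :=
  fun _ _ hστ => sum_le_sum fun i _ => posPart_rpow_antitone ha hp (z i) hστ

theorem eq_zero_of_forall_le (ha : 0 ≤ a) (hp : p ≠ 0) {τ : ℝ} (hτ : ∀ i, z i ≤ τ) :
    entmaxNormalizer a p z τ = 0 :=
  sum_eq_zero fun i _ => by
    rw [max_eq_right (mul_nonpos_of_nonneg_of_nonpos ha (sub_nonpos.2 (hτ i))),
      Real.zero_rpow hp]

theorem strictAntiOn_pos (ha : 0 < a) (hp : 0 < p) :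
    StrictAntiOn (entmaxNormalizer a p z) {τ | 0 < entmaxNormalizer a p z τ} := by
  intro σ _ τ hτ hστ
  obtain ⟨i, -, hi⟩ : ∃ i ∈ univ, 0 < max (a * (z i - τ)) 0 ^ p :=
    exists_lt_of_sum_lt (f := fun _ => (0 : ℝ)) (by simpa [entmaxNormalizer] using hτ)
  have hτi : 0 < a * (z i - τ) := by
    by_contra! h
    rw [max_eq_right h, Real.zero_rpow hp.ne'] at hi
    exact hi.false
  have hσi : a * (z i - τ) < a * (z i - σ) := mul_lt_mul_of_pos_left (by linarith) ha
  refine sum_lt_sum (fun j _ => posPart_rpow_antitone ha.le hp.le (z j) hστ.le)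
    ⟨i, mem_univ i, Real.rpow_lt_rpow (le_max_right _ _) ?_ hp⟩
  rwa [max_eq_left hτi.le, max_eq_left (hτi.trans hσi).le]

theorem tendsto_atBot_atTop [Nonempty ι] (ha : 0 < a) (hp : 0 < p) :
    Tendsto (entmaxNormalizer a p z) atBot atTop := by
  obtain ⟨i⟩ := ‹Nonempty ι›
  have hlin : Tendsto (fun τ => a * (z i - τ)) atBot atTop :=
    ((tendsto_atTop_add_const_left atBot (z i) tendsto_neg_atBot_atTop).const_mul_atTop ha).congr
      fun τ => by rw [sub_eq_add_neg]
  refine tendsto_atTop_mono (fun τ => single_le_sum (f := fun i => max (a * (z i - τ)) 0 ^ p)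
    (fun j _ => Real.rpow_nonneg (le_max_right _ _) p) (mem_univ i)) ?_
  exact (tendsto_rpow_atTop hp).comp (tendsto_atTop_mono (fun τ => le_max_left _ _) hlin)

end entmaxNormalizer

theorem existsUnique_eq_of_strictAntiOn_pos {f : ℝ → ℝ} {c x₀ : ℝ} (hf : Continuous f)
    (hanti : StrictAntiOn f {τ | 0 < f τ}) (hbot : Tendsto f atBot atTop) (hc : 0 < c)
    (hx₀ : f x₀ ≤ c) : ∃! τ, f τ = c := by
  obtain ⟨σ, hσ, hσx₀⟩ := ((hbot.eventually_ge_atTop c).and (eventually_le_atBot x₀)).exists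
  obtain ⟨τ, -, hτ⟩ := intermediate_value_Icc' hσx₀ hf.continuousOn ⟨hx₀, hσ⟩
  have hpos : ∀ {x}, f x = c → 0 < f x := fun hx => hx ▸ hc
  exact ⟨τ, hτ, fun y hy => hanti.injOn (hpos hy) (hpos hτ) (hy.trans hτ.symm)⟩

/-- Let `α > 1` and `z ∈ ℝ^d` (`d ≥ 1`).  The normalization function
`φ(τ) = Σ_i [(α−1)(z_i − τ)]_+^{1/(α−1)}` is continuous and non-increasing on
`ℝ`, strictly decreasing on `{τ : φ(τ) > 0}`, tends to `+∞` as `τ → −∞`, and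
equals `0` whenever `τ ≥ max_i z_i`; consequently there is exactly one
`τ* ∈ ℝ` with `φ(τ*) = 1`. -/
theorem entmax_normalization_function (d : ℕ) (hd : 0 < d) (α : ℝ) (hα : 1 < α)
    (z : Fin d → ℝ) (φ : ℝ → ℝ)
    (hφ : ∀ τ, φ τ = ∑ i, max ((α - 1) * (z i - τ)) 0 ^ (1 / (α - 1))) :
    Continuous φ ∧
    Antitone φ ∧
    StrictAntiOn φ {τ | 0 < φ τ} ∧
    Filter.Tendsto φ Filter.atBot Filter.atTop ∧
    (∀ τ, (∀ i, z i ≤ τ) → φ τ = 0) ∧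
    (∃! τ, φ τ = 1) := by
  obtain rfl : φ = entmaxNormalizer (α - 1) (1 / (α - 1)) z := funext hφ
  have : Nonempty (Fin d) := ⟨⟨0, hd⟩⟩
  have ha : 0 < α - 1 := sub_pos.2 hα
  have hp : 0 < 1 / (α - 1) := one_div_pos.2 ha
  have hcont := entmaxNormalizer.continuous (a := α - 1) (z := z) hp.le
  have hstrict := entmaxNormalizer.strictAntiOn_pos (z := z) ha hp
  have htend := entmaxNormalizer.tendsto_atBot_atTop (z := z) ha hp
  have hzero : ∀ τ, (∀ i, z i ≤ τ) → entmaxNormalizer (α - 1) (1 / (α - 1)) z τ = 0 :=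
    fun _ => entmaxNormalizer.eq_zero_of_forall_le ha.le hp.ne'
  obtain ⟨M, hM⟩ := Finite.bddAbove_range z
  refine ⟨hcont, entmaxNormalizer.antitone ha.le hp.le, hstrict, htend, hzero,
    existsUnique_eq_of_strictAntiOn_pos (x₀ := M) hcont hstrict htend one_pos ?_⟩
  rw [hzero M fun i => hM ⟨i, rfl⟩]
  exact zero_le_one
end
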